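/- One-step telescoping identity for recursive rejection sampling: for every k ∈ {1,…,K} and every z ∈ 𝒳, Pr{A^(1:k−1) = rej^{k−1} and T^(k) = z} = Pr{A^(1:k−1) = rej^{k−1}, X̂^(k) = z, A^(k) = acc} + Pr{A^(1:k) = rej^{k} and T^(k+1) = z}. -/
import Mathlib


open scoped BigOperators Classical

/-- A probability distribution on a finite alphabet. -/
def IsProbDist {X : Type*} [Fintype X] (p : X → ℝ) : Prop :=
  (∀ x, 0 ≤ p x) ∧ ∑ x, p x = 1

/-- `Norm` with a default distribution `d`, used when `f` is identically zero. -/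
noncomputable def normOr {X : Type*} [Fintype X] (d f : X → ℝ) : X → ℝ :=
  if ∀ x, f x = 0 then d else fun x => f x / ∑ x', f x'

/-- Acceptance probability `min {1, qv / pv}`, interpreted as `1` when `pv = 0`. -/
noncomputable def accProb (pv qv : ℝ) : ℝ :=
  if pv = 0 then 1 else min 1 (qv / pv)

/-- Residual distributions: `Qres K q pdraft d m` is `q^{(m+1)}` (it is fed the whole draft
tuple for convenience; it only depends on the first `m - 1` coordinates). -/
noncomputable def Qres {X : Type*} [Fintype X] (K : ℕ) (q : X → ℝ)
    (pdraft : (k : Fin K) → (Fin (k : ℕ) → X) → X → ℝ) (d : X → ℝ) :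
    ℕ → (Fin K → X) → X → ℝ
  | 0, _, t => q t
  | m + 1, x, t =>
    if hm : m < K then
      normOr d (fun s =>
        max 0 (Qres K q pdraft d m x s -
          pdraft ⟨m, hm⟩ (fun j => x (Fin.castLE hm.le j)) s)) t
    else d t

/-- Probability that the draft process produces the tuple `x` of draft tokens. -/
noncomputable def trajProb {X : Type*} [Fintype X] (K : ℕ)
    (pdraft : (k : Fin K) → (Fin (k : ℕ) → X) → X → ℝ) (x : Fin K → X) : ℝ :=
  ∏ k : Fin K, pdraft k (fun j => x (Fin.castLE k.isLt.le j)) (x k)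

/-- Conditional acceptance probability of the `m`-th draft (0-indexed), given the drafts. -/
noncomputable def thetaN {X : Type*} [Fintype X] (K : ℕ) (q : X → ℝ)
    (pdraft : (k : Fin K) → (Fin (k : ℕ) → X) → X → ℝ) (d : X → ℝ)
    (m : ℕ) (x : Fin K → X) : ℝ :=
  if hm : m < K then
    accProb (pdraft ⟨m, hm⟩ (fun j => x (Fin.castLE hm.le j)) (x ⟨m, hm⟩))
      (Qres K q pdraft d m x (x ⟨m, hm⟩))
  else 0

/-- The law of the output `Z` of recursive rejection sampling: sum over draft tuples of the
probability of the tuple times the conditional probability that the output equals `z`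
(first acceptance at round `k` outputs the `k`-th draft; if every draft is rejected the
output is drawn from the last residual distribution `q^{(K+1)}`). -/
noncomputable def rrsLaw {X : Type*} [Fintype X] (K : ℕ) (q : X → ℝ)
    (pdraft : (k : Fin K) → (Fin (k : ℕ) → X) → X → ℝ) (d : X → ℝ) (z : X) : ℝ :=
  ∑ x : Fin K → X, trajProb K pdraft x *
    ((∑ k : Fin K,
        (∏ j ∈ Finset.range (k : ℕ), (1 - thetaN K q pdraft d j x)) *
          thetaN K q pdraft d (k : ℕ) x * (if x k = z then 1 else 0)) +
      (∏ j ∈ Finset.range K, (1 - thetaN K q pdraft d j x)) *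
        Qres K q pdraft d K x z)

section Aux

variable {X : Type*} [Fintype X]

/-- insertion of a value at coordinate `i`. -/
noncomputable def extAt {K : ℕ} (i : Fin K) (y : {j : Fin K // j ≠ i} → X) (s : X) :
    Fin K → X :=
  fun j => if h : j = i then s else y ⟨j, h⟩

lemma extAt_eq {K : ℕ} (i : Fin K) (y : {j : Fin K // j ≠ i} → X) (s : X) :
    extAt i y s i = s := dif_pos rfl

lemma extAt_ne {K : ℕ} (i : Fin K) (y : {j : Fin K // j ≠ i} → X) (s : X)
    {j : Fin K} (h : j ≠ i) : extAt i y s j = y ⟨j, h⟩ := dif_neg h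

lemma extAt_agree {K : ℕ} (i : Fin K) (y : {j : Fin K // j ≠ i} → X) (s s' : X)
    {j : Fin K} (h : j ≠ i) : extAt i y s j = extAt i y s' j := by
  rw [extAt_ne i y s h, extAt_ne i y s' h]

lemma sum_split {K : ℕ} (i : Fin K) (F : (Fin K → X) → ℝ) :
    ∑ x : Fin K → X, F x
      = ∑ y : {j : Fin K // j ≠ i} → X, ∑ s : X, F (extAt i y s) := by
  rw [← Equiv.sum_comp (Equiv.funSplitAt i X).symm F, Fintype.sum_prod_type]
  rw [Finset.sum_comm]
  refine Finset.sum_congr rfl fun y _ => Finset.sum_congr rfl fun s _ => ?_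
  congr 1
  funext j
  by_cases h : j = i
  · subst h; simp [extAt]
  · simp [extAt, h]

variable {K : ℕ} (q : X → ℝ) (pdraft : (k : Fin K) → (Fin (k : ℕ) → X) → X → ℝ)
  (d : X → ℝ)

lemma Qres_congr : ∀ (n : ℕ) (x x' : Fin K → X),
    (∀ j : Fin K, (j : ℕ) < n → x j = x' j) →
    Qres K q pdraft d n x = Qres K q pdraft d n x'
  | 0, x, x', _ => rfl
  | n + 1, x, x', h => by
    funext t
    simp only [Qres]
    split_ifs with hm
    · rw [Qres_congr n x x' (fun j hj => h j (Nat.lt_succ_of_lt hj)),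
        show (fun j : Fin n => x (Fin.castLE hm.le j))
            = fun j : Fin n => x' (Fin.castLE hm.le j) from
          funext fun j => h _ (by simpa using Nat.lt_succ_of_lt j.isLt)]
    · rfl

lemma thetaN_congr (n : ℕ) (x x' : Fin K → X)
    (h : ∀ j : Fin K, (j : ℕ) < n + 1 → x j = x' j) :
    thetaN K q pdraft d n x = thetaN K q pdraft d n x' := by
  simp only [thetaN]
  split_ifs with hm
  · rw [Qres_congr q pdraft d n x x' (fun j hj => h j (Nat.lt_succ_of_lt hj)),
      show (fun j : Fin n => x (Fin.castLE hm.le j))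
          = fun j : Fin n => x' (Fin.castLE hm.le j) from
        funext fun j => h _ (by simpa using Nat.lt_succ_of_lt j.isLt),
      h ⟨n, hm⟩ (Nat.lt_succ_self n)]
  · rfl

lemma normOr_isProbDist (hd : IsProbDist d) (f : X → ℝ) (hf : ∀ s, 0 ≤ f s) :
    IsProbDist (normOr d f) := by
  unfold normOr
  split_ifs with h
  · exact hd
  · have hpos : 0 < ∑ s, f s := by
      rcases not_forall.mp h with ⟨s, hs⟩
      exact Finset.sum_pos' (fun i _ => hf i)
        ⟨s, Finset.mem_univ s, lt_of_le_of_ne (hf s) (Ne.symm hs)⟩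
    refine ⟨fun t => div_nonneg (hf t) hpos.le, ?_⟩
    rw [← Finset.sum_div, div_self hpos.ne']

lemma Qres_isProbDist (hq : IsProbDist q) (hd : IsProbDist d)
    (hp : ∀ (k : Fin K) (h : Fin (k : ℕ) → X), IsProbDist (pdraft k h)) :
    ∀ (n : ℕ) (x : Fin K → X), IsProbDist (Qres K q pdraft d n x)
  | 0, _ => hq
  | n + 1, x => by
    by_cases hm : n < K
    · have : Qres K q pdraft d (n + 1) x
          = normOr d (fun s => max 0 (Qres K q pdraft d n x s -
              pdraft ⟨n, hm⟩ (fun j => x (Fin.castLE hm.le j)) s)) := by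
        funext t; simp only [Qres, dif_pos hm]
      rw [this]
      exact normOr_isProbDist d hd _ (fun s => le_max_left _ _)
    · have : Qres K q pdraft d (n + 1) x = d := by
        funext t; simp only [Qres, dif_neg hm]
      rw [this]; exact hd

/-- core single-round identity -/
lemma core_identity (z : X) (p qm : X → ℝ) (hp : IsProbDist p) (hqm : IsProbDist qm) :
    ∑ s, p s * (accProb (p s) (qm s) * (if s = z then 1 else 0)
      + (1 - accProb (p s) (qm s)) * normOr d (fun t => max 0 (qm t - p t)) z)
    = qm z := by
  have hmin : ∀ s, p s * accProb (p s) (qm s) = min (p s) (qm s) := by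
    intro s
    unfold accProb
    split_ifs with h
    · rw [h]; simp [min_eq_left (hqm.1 s)]
    · have hps : 0 < p s := lt_of_le_of_ne (hp.1 s) (Ne.symm h)
      rw [mul_min_of_nonneg _ _ hps.le, mul_one, mul_div_cancel₀ _ hps.ne']
  have hsum1 : ∑ s, p s * (accProb (p s) (qm s) * (if s = z then 1 else 0))
      = min (p z) (qm z) := by
    rw [show (fun s => p s * (accProb (p s) (qm s) * (if s = z then 1 else 0)))
        = fun s => if s = z then min (p s) (qm s) else 0 from
      funext fun s => by by_cases h : s = z <;> simp [h, ← mul_assoc, hmin]]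
    simp
  have hsum2 : ∑ s, p s * (1 - accProb (p s) (qm s))
      = ∑ s, max 0 (qm s - p s) := by
    have e1 : ∀ s, p s * (1 - accProb (p s) (qm s))
        = p s - min (p s) (qm s) := fun s => by rw [mul_sub, mul_one, hmin]
    have e2 : ∀ s, max 0 (qm s - p s) = qm s - min (p s) (qm s) := fun s => by
      rcases le_total (p s) (qm s) with h | h
      · rw [min_eq_left h, max_eq_right (by linarith)]
      · rw [min_eq_right h, max_eq_left (by linarith)]; ring
    simp only [e1, e2, Finset.sum_sub_distrib, hp.2, hqm.2]
  rw [Finset.sum_congr rfl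
      (fun s _ => mul_add (p s) (accProb (p s) (qm s) * (if s = z then 1 else 0))
        ((1 - accProb (p s) (qm s)) * normOr d (fun t => max 0 (qm t - p t)) z)),
    Finset.sum_add_distrib, hsum1]
  have : ∑ s, p s * ((1 - accProb (p s) (qm s)) * normOr d (fun t => max 0 (qm t - p t)) z)
      = (∑ s, max 0 (qm s - p s)) * normOr d (fun t => max 0 (qm t - p t)) z := by
    rw [← hsum2, Finset.sum_mul]
    exact Finset.sum_congr rfl fun s _ => (mul_assoc _ _ _).symm
  rw [this]
  unfold normOr
  split_ifs with h
  · have hT : ∑ s, max 0 (qm s - p s) = 0 := Finset.sum_eq_zero fun s _ => h s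
    have hz0 : max 0 (qm z - p z) = 0 := h z
    have hz : qm z ≤ p z := by
      by_contra hc
      push_neg at hc
      rw [max_eq_right (by linarith)] at hz0
      linarith
    rw [hT, min_eq_right hz, zero_mul, add_zero]
  · have hT : (0:ℝ) < ∑ s, max 0 (qm s - p s) := by
      rcases not_forall.mp h with ⟨s, hs⟩
      have hs' : max 0 (qm s - p s) ≠ 0 := hs
      exact Finset.sum_pos' (fun i _ => le_max_left _ _)
        ⟨s, Finset.mem_univ s, lt_of_le_of_ne (le_max_left _ _) (Ne.symm hs')⟩
    rw [mul_div_cancel₀ _ hT.ne']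
    show min (p z) (qm z) + max 0 (qm z - p z) = qm z
    rcases le_total (p z) (qm z) with hc | hc
    · rw [min_eq_left hc, max_eq_right (by linarith)]; ring
    · rw [min_eq_right hc, max_eq_left (by linarith)]; ring

end Aux

section Aux2

set_option linter.unusedSectionVars false

variable {X : Type*} [Fintype X] {K : ℕ}
  (q : X → ℝ) (pdraft : (k : Fin K) → (Fin (k : ℕ) → X) → X → ℝ) (d : X → ℝ)

/-- partial trajectory probability: product of the first `n` draft factors. -/
noncomputable def trajP (n : ℕ) (x : Fin K → X) : ℝ :=
  ∏ k ∈ Finset.univ.filter (fun k : Fin K => (k : ℕ) < n),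
    pdraft k (fun j => x (Fin.castLE k.isLt.le j)) (x k)

lemma trajP_K (x : Fin K → X) : trajP pdraft K x = trajProb K pdraft x := by
  unfold trajP trajProb
  rw [Finset.filter_true_of_mem (fun k _ => k.isLt)]

lemma trajP_congr (n : ℕ) (x x' : Fin K → X)
    (h : ∀ j : Fin K, (j : ℕ) < n → x j = x' j) :
    trajP pdraft n x = trajP pdraft n x' := by
  refine Finset.prod_congr rfl fun k hk => ?_
  rw [Finset.mem_filter] at hk
  rw [h k hk.2, show (fun j => x (Fin.castLE k.isLt.le j))
      = fun j => x' (Fin.castLE k.isLt.le j) from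
    funext fun j => h _ (by have := j.isLt; simp only [Fin.coe_castLE]; omega)]

lemma trajP_succ (n : ℕ) (hn : n < K) (x : Fin K → X) :
    trajP pdraft (n + 1) x
      = trajP pdraft n x * pdraft ⟨n, hn⟩ (fun j => x (Fin.castLE hn.le j)) (x ⟨n, hn⟩) := by
  have hfil : Finset.univ.filter (fun k : Fin K => (k : ℕ) < n + 1)
      = insert (⟨n, hn⟩ : Fin K) (Finset.univ.filter (fun k : Fin K => (k : ℕ) < n)) := by
    ext k
    simp only [Finset.mem_filter, Finset.mem_univ, true_and, Finset.mem_insert, Fin.ext_iff]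
    omega
  rw [trajP, hfil, Finset.prod_insert (by simp)]
  exact mul_comm _ _

/-- the one-step difference function. -/
noncomputable def Hfun (m : ℕ) (hm : m < K) (z : X) (x : Fin K → X) : ℝ :=
  (∏ j ∈ Finset.range m, (1 - thetaN K q pdraft d j x)) *
    (Qres K q pdraft d m x z
      - thetaN K q pdraft d m x * (if x ⟨m, hm⟩ = z then 1 else 0)
      - (1 - thetaN K q pdraft d m x) * Qres K q pdraft d (m + 1) x z)

lemma Hfun_congr (m : ℕ) (hm : m < K) (z : X) (x x' : Fin K → X)
    (h : ∀ j : Fin K, (j : ℕ) < m + 1 → x j = x' j) :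
    Hfun q pdraft d m hm z x = Hfun q pdraft d m hm z x' := by
  have hprod : (∏ j ∈ Finset.range m, (1 - thetaN K q pdraft d j x))
      = ∏ j ∈ Finset.range m, (1 - thetaN K q pdraft d j x') := by
    refine Finset.prod_congr rfl fun j hj => ?_
    rw [Finset.mem_range] at hj
    rw [thetaN_congr q pdraft d j x x' (fun i hi => h i (by omega))]
  unfold Hfun
  rw [hprod, Qres_congr q pdraft d m x x' (fun j hj => h j (Nat.lt_succ_of_lt hj)),
    Qres_congr q pdraft d (m + 1) x x' h,
    thetaN_congr q pdraft d m x x' h, h ⟨m, hm⟩ (Nat.lt_succ_self m)]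

variable [Nonempty X]

lemma base_sum_zero (hq : IsProbDist q) (hd : IsProbDist d)
    (hp : ∀ (k : Fin K) (h : Fin (k : ℕ) → X), IsProbDist (pdraft k h))
    (m : ℕ) (hm : m < K) (z : X) :
    ∑ x : Fin K → X, trajP pdraft (m + 1) x * Hfun q pdraft d m hm z x = 0 := by
  set i : Fin K := ⟨m, hm⟩ with hi
  rw [sum_split i]
  refine Finset.sum_eq_zero fun y _ => ?_
  obtain ⟨s₀⟩ := ‹Nonempty X›
  set x₀ : Fin K → X := extAt i y s₀ with hx₀
  set pd : X → ℝ := pdraft i (fun j => x₀ (Fin.castLE hm.le j)) with hpd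
  set Qm : X → ℝ := Qres K q pdraft d m x₀ with hQm
  have hagree : ∀ (s : X) (j : Fin K), (j : ℕ) < m + 1 → j ≠ i → extAt i y s j = x₀ j :=
    fun s j _ hj => extAt_agree i y s s₀ hj
  have hagree' : ∀ (s : X) (j : Fin K), (j : ℕ) < m → extAt i y s j = x₀ j :=
    fun s j hj => hagree s j (by omega) (by simp [hi, Fin.ext_iff]; omega)
  have hpref : ∀ s : X, (fun j : Fin m => extAt i y s (Fin.castLE hm.le j))
      = fun j : Fin m => x₀ (Fin.castLE hm.le j) := by
    intro s; funext j
    exact hagree' s _ (by have := j.isLt; simp only [Fin.coe_castLE]; omega)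
  have key : ∀ s : X,
      trajP pdraft (m + 1) (extAt i y s) * Hfun q pdraft d m hm z (extAt i y s)
      = (trajP pdraft m x₀ * ∏ j ∈ Finset.range m, (1 - thetaN K q pdraft d j x₀)) *
          (pd s * (Qm z
            - (accProb (pd s) (Qm s) * (if s = z then 1 else 0)
              + (1 - accProb (pd s) (Qm s)) *
                normOr d (fun t => max 0 (Qm t - pd t)) z))) := by
    intro s
    have e1 : trajP pdraft (m + 1) (extAt i y s) = trajP pdraft m x₀ * pd s := by
      rw [trajP_succ pdraft m hm, trajP_congr pdraft m _ x₀ (hagree' s), hpd,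
        hpref s]
      congr 1
      exact congrArg _ (extAt_eq i y s)
    have etheta : ∀ j, j < m → thetaN K q pdraft d j (extAt i y s)
        = thetaN K q pdraft d j x₀ := fun j hj =>
      thetaN_congr q pdraft d j _ _ (fun i' hi' => hagree' s i' (by omega))
    have eQm : Qres K q pdraft d m (extAt i y s) = Qm :=
      Qres_congr q pdraft d m _ _ (fun j hj => hagree' s j hj)
    have eQn : Qres K q pdraft d (m + 1) (extAt i y s) z
        = normOr d (fun t => max 0 (Qm t - pd t)) z := by
      show (if hm' : m < K then _ else _) = _
      rw [dif_pos hm, eQm, hpd, hpref s]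
    have eth : thetaN K q pdraft d m (extAt i y s) = accProb (pd s) (Qm s) := by
      show (if hm' : m < K then _ else _) = _
      rw [dif_pos hm]
      have : extAt i y s ⟨m, hm⟩ = s := extAt_eq i y s
      rw [this, eQm, hpd, hpref s]
    have eprod : (∏ j ∈ Finset.range m, (1 - thetaN K q pdraft d j (extAt i y s)))
        = ∏ j ∈ Finset.range m, (1 - thetaN K q pdraft d j x₀) := by
      refine Finset.prod_congr rfl fun j hj => ?_
      rw [Finset.mem_range] at hj
      rw [etheta j hj]
    have eind : extAt i y s ⟨m, hm⟩ = s := extAt_eq i y s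
    unfold Hfun
    rw [e1, eprod, eQm, eQn, eth, eind]
    ring
  rw [Finset.sum_congr rfl fun s _ => key s, ← Finset.mul_sum]
  have hpdP : IsProbDist pd := hp i _
  have hqmP : IsProbDist Qm := Qres_isProbDist q pdraft d hq hd hp m x₀
  have : ∑ s : X, pd s * (Qm z
      - (accProb (pd s) (Qm s) * (if s = z then 1 else 0)
        + (1 - accProb (pd s) (Qm s)) * normOr d (fun t => max 0 (Qm t - pd t)) z)) = 0 := by
    simp only [mul_sub]
    rw [Finset.sum_sub_distrib, ← Finset.sum_mul, hpdP.2, one_mul,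
      core_identity d z pd Qm hpdP hqmP, sub_self]
  rw [this, mul_zero]

lemma step_sum
    (hp : ∀ (k : Fin K) (h : Fin (k : ℕ) → X), IsProbDist (pdraft k h))
    (i : Fin K) (F : (Fin K → X) → ℝ)
    (hF : ∀ (y : {j : Fin K // j ≠ i} → X) (s s' : X), F (extAt i y s) = F (extAt i y s')) :
    ∑ x : Fin K → X, F x
      = (Fintype.card X : ℝ) *
        ∑ x : Fin K → X, F x * pdraft i (fun j => x (Fin.castLE i.isLt.le j)) (x i) := by
  rw [sum_split i F,
    sum_split i (fun x => F x * pdraft i (fun j => x (Fin.castLE i.isLt.le j)) (x i)),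
    Finset.mul_sum]
  refine Finset.sum_congr rfl fun y _ => ?_
  obtain ⟨s₀⟩ := ‹Nonempty X›
  set x₀ : Fin K → X := extAt i y s₀ with hx₀
  have hpref : ∀ s : X, (fun j : Fin (i : ℕ) => extAt i y s (Fin.castLE i.isLt.le j))
      = fun j => x₀ (Fin.castLE i.isLt.le j) := by
    intro s; funext j
    refine extAt_agree i y s s₀ ?_
    have := j.isLt
    simp only [ne_eq, Fin.ext_iff, Fin.coe_castLE]
    omega
  have lhs : ∑ s : X, F (extAt i y s) = (Fintype.card X : ℝ) * F x₀ := by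
    rw [Finset.sum_congr rfl fun s _ => hF y s s₀, Finset.sum_const, Finset.card_univ,
      nsmul_eq_mul]
  have rhs : ∑ s : X, F (extAt i y s) *
      pdraft i (fun j => extAt i y s (Fin.castLE i.isLt.le j)) (extAt i y s i) = F x₀ := by
    have : ∀ s : X, F (extAt i y s) *
        pdraft i (fun j => extAt i y s (Fin.castLE i.isLt.le j)) (extAt i y s i)
        = F x₀ * pdraft i (fun j => x₀ (Fin.castLE i.isLt.le j)) s := by
      intro s
      rw [hF y s s₀, hpref s, extAt_eq i y s]
    rw [Finset.sum_congr rfl fun s _ => this s, ← Finset.mul_sum, (hp i _).2, mul_one]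
  rw [lhs, rhs]

end Aux2

/-- **One-step telescoping identity for recursive rejection sampling.**  For `1 ≤ k ≤ K`,
`Pr{A^(1:k−1) = rej^{k−1}, T^(k) = z}` equals
`Pr{A^(1:k−1) = rej^{k−1}, X̂^(k) = z, A^(k) = acc} + Pr{A^(1:k) = rej^k, T^(k+1) = z}`,
where `T^(k)` is, conditionally on the drafts, independent of the acceptance indicators with
law `q^(k)(·|X̂^(1:k−2)) = Qres K q pdraft d (k-1)`. -/
theorem rrs_telescoping {X : Type*} [Fintype X] [Nonempty X]
    (K : ℕ) (hK : 1 ≤ K)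
    (q : X → ℝ) (hq : IsProbDist q)
    (pdraft : (k : Fin K) → (Fin (k : ℕ) → X) → X → ℝ)
    (hp : ∀ (k : Fin K) (h : Fin (k : ℕ) → X), IsProbDist (pdraft k h))
    (d : X → ℝ) (hd : IsProbDist d)
    (k : ℕ) (hk1 : 1 ≤ k) (hk2 : k ≤ K) (z : X) :
    (∑ x : Fin K → X, trajProb K pdraft x *
        ((∏ j ∈ Finset.range (k - 1), (1 - thetaN K q pdraft d j x)) *
          Qres K q pdraft d (k - 1) x z))
      =
    (∑ x : Fin K → X, trajProb K pdraft x *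
        ((∏ j ∈ Finset.range (k - 1), (1 - thetaN K q pdraft d j x)) *
          thetaN K q pdraft d (k - 1) x * (if x ⟨k - 1, by omega⟩ = z then 1 else 0)))
      +
    (∑ x : Fin K → X, trajProb K pdraft x *
        ((∏ j ∈ Finset.range k, (1 - thetaN K q pdraft d j x)) *
          Qres K q pdraft d k x z)) := by
  obtain ⟨m, rfl⟩ : ∃ m, k = m + 1 := ⟨k - 1, by omega⟩
  have hm : m < K := by omega
  rw [← sub_eq_zero]
  have key : (∑ x : Fin K → X, trajProb K pdraft x *
        ((∏ j ∈ Finset.range (m + 1 - 1), (1 - thetaN K q pdraft d j x)) *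
          Qres K q pdraft d (m + 1 - 1) x z))
      - ((∑ x : Fin K → X, trajProb K pdraft x *
        ((∏ j ∈ Finset.range (m + 1 - 1), (1 - thetaN K q pdraft d j x)) *
          thetaN K q pdraft d (m + 1 - 1) x * (if x ⟨m + 1 - 1, by omega⟩ = z then 1 else 0)))
      + (∑ x : Fin K → X, trajProb K pdraft x *
        ((∏ j ∈ Finset.range (m + 1), (1 - thetaN K q pdraft d j x)) *
          Qres K q pdraft d (m + 1) x z)))
      = ∑ x : Fin K → X, trajP pdraft K x * Hfun q pdraft d m hm z x := by
    rw [← Finset.sum_add_distrib, ← Finset.sum_sub_distrib]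
    refine Finset.sum_congr rfl fun x _ => ?_
    rw [trajP_K]
    show trajProb K pdraft x *
        ((∏ j ∈ Finset.range m, (1 - thetaN K q pdraft d j x)) * Qres K q pdraft d m x z)
      - (trajProb K pdraft x *
          ((∏ j ∈ Finset.range m, (1 - thetaN K q pdraft d j x)) *
            thetaN K q pdraft d m x * (if x ⟨m, hm⟩ = z then 1 else 0))
        + trajProb K pdraft x *
          ((∏ j ∈ Finset.range (m + 1), (1 - thetaN K q pdraft d j x)) *
            Qres K q pdraft d (m + 1) x z))
      = trajProb K pdraft x * Hfun q pdraft d m hm z x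
    unfold Hfun
    rw [Finset.prod_range_succ]
    ring
  rw [key]
  -- prove the sum vanishes, by induction marginalizing the tail coordinates
  suffices h : ∀ n, m + 1 + n ≤ K →
      ∑ x : Fin K → X, trajP pdraft (m + 1 + n) x * Hfun q pdraft d m hm z x = 0 by
    have := h (K - (m + 1)) (by omega)
    rwa [show m + 1 + (K - (m + 1)) = K by omega] at this
  intro n
  induction n with
  | zero =>
    intro _
    simpa using base_sum_zero q pdraft d hq hd hp m hm z
  | succ n ih =>
    intro hn
    have hjK : m + 1 + n < K := by omega
    set i : Fin K := ⟨m + 1 + n, hjK⟩ with hi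
    have hF : ∀ (y : {j : Fin K // j ≠ i} → X) (s s' : X),
        (fun x => trajP pdraft (m + 1 + n) x * Hfun q pdraft d m hm z x) (extAt i y s)
        = (fun x => trajP pdraft (m + 1 + n) x * Hfun q pdraft d m hm z x) (extAt i y s') := by
      intro y s s'
      have hag : ∀ (j : Fin K), (j : ℕ) < m + 1 + n → extAt i y s j = extAt i y s' j := by
        intro j hj
        exact extAt_agree i y s s' (by simp [hi, Fin.ext_iff]; omega)
      simp only
      rw [trajP_congr pdraft (m + 1 + n) _ _ hag,
        Hfun_congr q pdraft d m hm z _ _ (fun j hj => hag j (by omega))]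
    have hstep := step_sum pdraft hp i
      (fun x => trajP pdraft (m + 1 + n) x * Hfun q pdraft d m hm z x) hF
    have hconv : ∀ x : Fin K → X,
        (trajP pdraft (m + 1 + n) x * Hfun q pdraft d m hm z x) *
          pdraft i (fun j => x (Fin.castLE i.isLt.le j)) (x i)
        = trajP pdraft (m + 1 + n + 1) x * Hfun q pdraft d m hm z x := by
      intro x
      rw [trajP_succ pdraft (m + 1 + n) hjK x]
      ring
    rw [Finset.sum_congr rfl fun x _ => hconv x] at hstep
    have h0 := ih (by omega)
    rw [h0] at hstep
    have hcard : (Fintype.card X : ℝ) ≠ 0 := by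
      simp [Fintype.card_ne_zero]
    have := hstep.symm
    rcases mul_eq_zero.mp this with h | h
    · exact absurd h hcard
    · exact h
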